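/- arXiv:1602.04262 — 3 statements merged into one kernel-verified Lean document; each statement's English description precedes it below -/
import Mathlib

section
/- The matrix R_q(x) specialized at x = q² has rank 1, and R_q(x) specialized at x = q⁻² has rank 3; for all other nonzero x (i.e., x ≠ q² and x ≠ q⁻²), R_q(x) is invertible. -/
open Matrix

noncomputable section

def RqMat (q x : ℂ) : Matrix (Fin 4) (Fin 4) ℂ :=
  !![q - x * q⁻¹, 0, 0, 0;
     0, 1 - x, x * (q - q⁻¹), 0;
     0, q - q⁻¹, 1 - x, 0;
     0, 0, 0, q - x * q⁻¹]

lemma rank_ge_of_unit {r : ℕ} (M : Matrix (Fin 4) (Fin 4) ℂ)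
    (P : Matrix (Fin r) (Fin 4) ℂ) (Q : Matrix (Fin 4) (Fin r) ℂ)
    (h : IsUnit (P * M * Q)) : r ≤ M.rank := by
  have h1 : (P * M * Q).rank = r := by
    rw [Matrix.rank_of_isUnit _ h, Fintype.card_fin]
  calc r = (P * M * Q).rank := h1.symm
    _ ≤ (M * Q).rank := by
        rw [Matrix.mul_assoc]; exact Matrix.rank_mul_le_right P (M * Q)
    _ ≤ M.rank := Matrix.rank_mul_le_left M Q

set_option maxHeartbeats 2000000 in
/-- `R_q(q²)` has rank `1`, `R_q(q⁻²)` has rank `3`, and for all other nonzero `x`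
the matrix `R_q(x)` is invertible. -/
theorem RqMat_rank_and_invertibility (q : ℂ) (hq : q ≠ 0) (hq4 : q ^ 4 ≠ 1) :
    (RqMat q (q ^ 2)).rank = 1 ∧
    (RqMat q ((q ^ 2)⁻¹)).rank = 3 ∧
    ∀ x : ℂ, x ≠ 0 → x ≠ q ^ 2 → x ≠ (q ^ 2)⁻¹ → IsUnit (RqMat q x) := by
  have hq2 : q ^ 2 ≠ 1 := fun h => hq4 (by rw [show (4:ℕ) = 2*2 by rfl, pow_mul, h, one_pow])
  have hqq : q - q⁻¹ ≠ 0 := by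
    intro h
    apply hq2
    have := sub_eq_zero.mp h
    field_simp at this
    linear_combination this
  have hd : q - (q ^ 2)⁻¹ * q⁻¹ ≠ 0 := by
    intro h
    apply hq4
    have := sub_eq_zero.mp h
    field_simp at this
    linear_combination this
  refine ⟨?_, ?_, ?_⟩
  · -- rank = 1
    have hub : (RqMat q (q ^ 2)).rank ≤ 1 := by
      have hfac : RqMat q (q ^ 2) =
          vecMulVec ![0, 1 - q ^ 2, q - q⁻¹, 0] ![0, 1, -q, 0] := by
        ext i j
        fin_cases i <;> fin_cases j <;>
          simp [RqMat, vecMulVec_apply, Matrix.vecHead, Matrix.vecTail] <;>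
          (try field_simp) <;> (try ring) <;> (try simp [Matrix.vecHead, Matrix.vecTail, Function.comp])
      rw [hfac, vecMulVec_eq (Fin 1)]
      refine le_trans (Matrix.rank_mul_le_left _ _) ?_
      exact (Matrix.rank_le_card_width (Matrix.replicateCol (Fin 1) ![0, 1 - q ^ 2, q - q⁻¹, 0])).trans (by simp)
    have hlb : 1 ≤ (RqMat q (q ^ 2)).rank := by
      apply rank_ge_of_unit _ (!![0, 0, 1, 0] : Matrix (Fin 1) (Fin 4) ℂ) (!![0; 1; 0; 0] : Matrix (Fin 4) (Fin 1) ℂ)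
      rw [Matrix.isUnit_iff_isUnit_det]
      have : ((!![0, 0, 1, 0] : Matrix (Fin 1) (Fin 4) ℂ) * RqMat q (q ^ 2) * (!![0; 1; 0; 0] : Matrix (Fin 4) (Fin 1) ℂ)) =
          !![q - q⁻¹] := by
        ext i j
        fin_cases i <;> fin_cases j <;>
          simp [RqMat, Matrix.mul_apply, Fin.sum_univ_four] <;>
          (try field_simp) <;> (try ring) <;>
          (try simp [Matrix.vecHead, Matrix.vecTail, Function.comp])
      rw [this, Matrix.det_fin_one]
      exact hqq.isUnit
    omega
  · -- rank = 3
    have hub : (RqMat q ((q ^ 2)⁻¹)).rank ≤ 3 := by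
      have hfac : RqMat q ((q ^ 2)⁻¹) =
          (!![(1:ℂ),0,0; 0,q⁻¹,0; 0,1,0; 0,0,1] : Matrix (Fin 4) (Fin 3) ℂ) *
          (!![q - (q^2)⁻¹ * q⁻¹, 0, 0, 0;
              0, q - q⁻¹, 1 - (q^2)⁻¹, 0;
              0, 0, 0, q - (q^2)⁻¹ * q⁻¹] : Matrix (Fin 3) (Fin 4) ℂ) := by
        ext i j
        fin_cases i <;> fin_cases j <;>
          simp [RqMat, Matrix.mul_apply, Fin.sum_univ_three, Matrix.vecHead, Matrix.vecTail] <;>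
          (try field_simp) <;> (try ring) <;> (try simp [Matrix.vecHead, Matrix.vecTail, Function.comp])
      rw [hfac]
      refine le_trans (Matrix.rank_mul_le_left _ _) ?_
      simpa using Matrix.rank_le_card_width
        (!![(1:ℂ),0,0; 0,q⁻¹,0; 0,1,0; 0,0,1] : Matrix (Fin 4) (Fin 3) ℂ)
    have hlb : 3 ≤ (RqMat q ((q ^ 2)⁻¹)).rank := by
      apply rank_ge_of_unit _ (!![1,0,0,0; 0,0,1,0; 0,0,0,1] : Matrix (Fin 3) (Fin 4) ℂ) (!![1,0,0; 0,1,0; 0,0,0; 0,0,1] : Matrix (Fin 4) (Fin 3) ℂ)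
      rw [Matrix.isUnit_iff_isUnit_det]
      have : ((!![1,0,0,0; 0,0,1,0; 0,0,0,1] : Matrix (Fin 3) (Fin 4) ℂ) * RqMat q ((q ^ 2)⁻¹) *
          (!![1,0,0; 0,1,0; 0,0,0; 0,0,1] : Matrix (Fin 4) (Fin 3) ℂ)) =
          !![q - (q^2)⁻¹ * q⁻¹, 0, 0; 0, q - q⁻¹, 0; 0, 0, q - (q^2)⁻¹ * q⁻¹] := by
        ext i j
        fin_cases i <;> fin_cases j <;>
          simp [RqMat, Matrix.mul_apply, Fin.sum_univ_four] <;>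
          (try field_simp) <;> (try ring) <;>
          (try simp [Matrix.vecHead, Matrix.vecTail, Function.comp])
      rw [this]
      have hdet3 : (!![q - (q^2)⁻¹ * q⁻¹, 0, 0; 0, q - q⁻¹, 0;
          0, 0, q - (q^2)⁻¹ * q⁻¹] : Matrix (Fin 3) (Fin 3) ℂ).det
          = (q - (q^2)⁻¹ * q⁻¹) * (q - q⁻¹) * (q - (q^2)⁻¹ * q⁻¹) := by
        simp [Matrix.det_fin_three]
        try ring
      rw [hdet3]
      exact (mul_ne_zero (mul_ne_zero hd hqq) hd).isUnit
    omega
  · -- invertibility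
    intro x hx hx1 hx2
    rw [Matrix.isUnit_iff_isUnit_det]
    have hdet : (RqMat q x).det = q⁻¹ * q⁻¹ * (x - q ^ 2) ^ 3 * (x - (q ^ 2)⁻¹) := by
      have h : q ^ 5 * (q ^ 5)⁻¹ = 1 := mul_inv_cancel₀ (pow_ne_zero 5 hq)
      simp [RqMat, Matrix.det_succ_row_zero, Fin.sum_univ_succ]
      field_simp
      ring_nf
    rw [hdet]
    exact (mul_ne_zero (mul_ne_zero (mul_ne_zero (inv_ne_zero hq) (inv_ne_zero hq))
      (pow_ne_zero 3 (sub_ne_zero.mpr hx1))) (sub_ne_zero.mpr hx2)).isUnit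

end
end

section
/- The set Γ of 4×4 complex matrices of the form diag-block [[c₁, 0, 0, 0], [0, a₁, b₂, 0], [0, -b₁, a₂, 0], [0, 0, 0, c₂]] with a₁a₂ + b₁b₂ = c₁c₂ and all of c₁, c₂, a₁a₂ + b₁b₂ nonzero is a subgroup of GL(4, ℂ). -/
open Matrix

/-- The set of matrices in `GL(4, ℂ)` of block form
`[[c₁,0,0,0],[0,a₁,b₂,0],[0,-b₁,a₂,0],[0,0,0,c₂]]` satisfying the free fermionic
condition `a₁a₂ + b₁b₂ = c₁c₂`, with `c₁, c₂, a₁a₂ + b₁b₂` all nonzero. -/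
def ffSet : Set (GL (Fin 4) ℂ) :=
  { M | ∃ a₁ a₂ b₁ b₂ c₁ c₂ : ℂ,
      a₁ * a₂ + b₁ * b₂ = c₁ * c₂ ∧ c₁ ≠ 0 ∧ c₂ ≠ 0 ∧ a₁ * a₂ + b₁ * b₂ ≠ 0 ∧
      (M : Matrix (Fin 4) (Fin 4) ℂ) =
        !![c₁, 0, 0, 0;
           0, a₁, b₂, 0;
           0, -b₁, a₂, 0;
           0, 0, 0, c₂] }

lemma ff_mul_eq (a₁ a₂ b₁ b₂ c₁ c₂ p₁ p₂ q₁ q₂ d₁ d₂ : ℂ) :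
    (!![c₁, 0, 0, 0; 0, a₁, b₂, 0; 0, -b₁, a₂, 0; 0, 0, 0, c₂] *
      !![d₁, 0, 0, 0; 0, p₁, q₂, 0; 0, -q₁, p₂, 0; 0, 0, 0, d₂] : Matrix (Fin 4) (Fin 4) ℂ) =
    !![c₁ * d₁, 0, 0, 0;
       0, a₁ * p₁ - b₂ * q₁, a₁ * q₂ + b₂ * p₂, 0;
       0, -(b₁ * p₁ + a₂ * q₁), a₂ * p₂ - b₁ * q₂, 0;
       0, 0, 0, c₂ * d₂] := by
  ext i j
  fin_cases i <;> fin_cases j <;>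
    simp [Matrix.mul_apply, Fin.sum_univ_succ, Matrix.vecHead, Matrix.vecTail] <;> ring

/-- The set `Γ` of free fermionic matrices is a subgroup of `GL(4, ℂ)`. -/
theorem ffSet_is_subgroup :
    ∃ H : Subgroup (GL (Fin 4) ℂ), (H : Set (GL (Fin 4) ℂ)) = ffSet := by
  refine ⟨{ carrier := ffSet, mul_mem' := ?_, one_mem' := ?_, inv_mem' := ?_ }, rfl⟩
  · -- mul_mem
    intro M N
    rintro ⟨a₁, a₂, b₁, b₂, c₁, c₂, h, hc₁, hc₂, hab, hM⟩
      ⟨p₁, p₂, q₁, q₂, d₁, d₂, h', hd₁, hd₂, hpq, hN⟩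
    refine ⟨a₁ * p₁ - b₂ * q₁, a₂ * p₂ - b₁ * q₂, b₁ * p₁ + a₂ * q₁, a₁ * q₂ + b₂ * p₂,
      c₁ * d₁, c₂ * d₂, by ring_nf; linear_combination (p₁*p₂+q₁*q₂) * h + c₁*c₂ * h',
      mul_ne_zero hc₁ hd₁, mul_ne_zero hc₂ hd₂, ?_, ?_⟩
    · have : (a₁ * p₁ - b₂ * q₁) * (a₂ * p₂ - b₁ * q₂) +
        (b₁ * p₁ + a₂ * q₁) * (a₁ * q₂ + b₂ * p₂) = (c₁ * c₂) * (d₁ * d₂) := by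
        linear_combination (p₁*p₂+q₁*q₂) * h + c₁*c₂ * h'
      rw [this]
      exact mul_ne_zero (mul_ne_zero hc₁ hc₂) (mul_ne_zero hd₁ hd₂)
    · show (↑(M * N) : Matrix (Fin 4) (Fin 4) ℂ) = _
      rw [Units.val_mul, hM, hN, ff_mul_eq]
  · -- one_mem
    exact ⟨1, 1, 0, 0, 1, 1, by ring, one_ne_zero, one_ne_zero, by norm_num, by
      show (1 : Matrix (Fin 4) (Fin 4) ℂ) = _
      ext i j
      fin_cases i <;> fin_cases j <;> simp [Matrix.vecHead, Matrix.vecTail]⟩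
  · -- inv_mem
    intro M
    rintro ⟨a₁, a₂, b₁, b₂, c₁, c₂, h, hc₁, hc₂, hab, hM⟩
    have hcc : c₁ * c₂ ≠ 0 := mul_ne_zero hc₁ hc₂
    refine ⟨a₂ / (c₁ * c₂), a₁ / (c₁ * c₂), -b₁ / (c₁ * c₂), -b₂ / (c₁ * c₂), c₁⁻¹, c₂⁻¹, ?_, inv_ne_zero hc₁,
      inv_ne_zero hc₂, ?_, ?_⟩
    · field_simp
      linear_combination h
    · have : a₂ / (c₁ * c₂) * (a₁ / (c₁ * c₂)) + -b₁ / (c₁ * c₂) * (-b₂ / (c₁ * c₂)) = c₁⁻¹ * c₂⁻¹ := by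
        field_simp
        linear_combination h
      rw [this]
      exact mul_ne_zero (inv_ne_zero hc₁) (inv_ne_zero hc₂)
    · have key : (↑M : Matrix (Fin 4) (Fin 4) ℂ) *
        !![c₁⁻¹, 0, 0, 0; 0, a₂ / (c₁ * c₂), -b₂ / (c₁ * c₂), 0; 0, -(-b₁ / (c₁ * c₂)), a₁ / (c₁ * c₂), 0; 0, 0, 0, c₂⁻¹] = 1 := by
        rw [hM]
        ext i j
        fin_cases i <;> fin_cases j <;>
          simp [Matrix.mul_apply, Fin.sum_univ_succ] <;>
          field_simp <;>
          first
          | linear_combination h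
          | linear_combination -h
          | ring
      show (↑M⁻¹ : Matrix (Fin 4) (Fin 4) ℂ) = _
      calc (↑M⁻¹ : Matrix (Fin 4) (Fin 4) ℂ) = (↑M : Matrix (Fin 4) (Fin 4) ℂ)⁻¹ := by
            simp [Matrix.coe_units_inv]
        _ = _ := Matrix.inv_eq_right_inv key
end

section
/- The group Γ of 4×4 matrices [[c₁,0,0,0],[0,a₁,b₂,0],[0,-b₁,a₂,0],[0,0,0,c₂]] with a₁a₂ + b₁b₂ = c₁c₂ ≠ 0, c₁ ≠ 0, c₂ ≠ 0 is isomorphic to GL(2, ℂ) × GL(1, ℂ). -/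
open Matrix

noncomputable section

def ffM (A : Matrix (Fin 2) (Fin 2) ℂ) (c d : ℂ) : Matrix (Fin 4) (Fin 4) ℂ :=
  !![c, 0, 0, 0;
     0, A 0 0, A 0 1, 0;
     0, A 1 0, A 1 1, 0;
     0, 0, 0, d]

lemma ffM_mul (A B : Matrix (Fin 2) (Fin 2) ℂ) (c d c' d' : ℂ) :
    ffM A c d * ffM B c' d' = ffM (A * B) (c * c') (d * d') := by
  ext i j
  fin_cases i <;> fin_cases j <;>
    simp [ffM, Matrix.mul_apply, Fin.sum_univ_four, Fin.sum_univ_two,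
      Matrix.vecHead, Matrix.vecTail]

lemma ffM_one : ffM 1 1 1 = 1 := by
  ext i j
  fin_cases i <;> fin_cases j <;>
    simp [ffM, Matrix.one_apply, Matrix.vecHead, Matrix.vecTail]

def ffφ : GL (Fin 2) ℂ × ℂˣ →* GL (Fin 4) ℂ where
  toFun p :=
    ⟨ffM (p.1 : Matrix (Fin 2) (Fin 2) ℂ) (p.2 : ℂ)
        ((Matrix.GeneralLinearGroup.det p.1 * p.2⁻¹ : ℂˣ) : ℂ),
     ffM ((p.1⁻¹ : GL (Fin 2) ℂ) : Matrix (Fin 2) (Fin 2) ℂ) ((p.2⁻¹ : ℂˣ) : ℂ)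
        (((Matrix.GeneralLinearGroup.det p.1 * p.2⁻¹ : ℂˣ)⁻¹ : ℂˣ) : ℂ),
     by
      rw [ffM_mul]
      have h1 : (p.1 : Matrix (Fin 2) (Fin 2) ℂ) * ((p.1⁻¹ : GL (Fin 2) ℂ) : Matrix (Fin 2) (Fin 2) ℂ) = 1 := by
        rw [← Units.val_mul, mul_inv_cancel, Units.val_one]
      have h2 : (p.2 : ℂ) * ((p.2⁻¹ : ℂˣ) : ℂ) = 1 := Units.mul_inv _
      have h3 : ((Matrix.GeneralLinearGroup.det p.1 * p.2⁻¹ : ℂˣ) : ℂ) *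
          (((Matrix.GeneralLinearGroup.det p.1 * p.2⁻¹ : ℂˣ)⁻¹ : ℂˣ) : ℂ) = 1 := Units.mul_inv _
      rw [h1, h2, h3, ffM_one],
     by
      rw [ffM_mul]
      have h1 : ((p.1⁻¹ : GL (Fin 2) ℂ) : Matrix (Fin 2) (Fin 2) ℂ) * (p.1 : Matrix (Fin 2) (Fin 2) ℂ) = 1 := by
        rw [← Units.val_mul, inv_mul_cancel, Units.val_one]
      have h2 : ((p.2⁻¹ : ℂˣ) : ℂ) * (p.2 : ℂ) = 1 := Units.inv_mul _
      have h3 : (((Matrix.GeneralLinearGroup.det p.1 * p.2⁻¹ : ℂˣ)⁻¹ : ℂˣ) : ℂ) *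
          ((Matrix.GeneralLinearGroup.det p.1 * p.2⁻¹ : ℂˣ) : ℂ) = 1 := Units.inv_mul _
      rw [h1, h2, h3, ffM_one]⟩
  map_one' := by
    refine Units.ext ?_
    show ffM ((1 : GL (Fin 2) ℂ) : Matrix (Fin 2) (Fin 2) ℂ) ((1 : ℂˣ) : ℂ) _ = 1
    simp [ffM_one, Units.val_one]
  map_mul' p q := by
    refine Units.ext ?_
    show ffM _ _ _ = (ffM _ _ _) * (ffM _ _ _)
    rw [ffM_mul]
    congr 1 <;>
      first
        | rfl
        | (push_cast [Prod.fst_mul, Prod.snd_mul, _root_.map_mul, Units.val_inv_eq_inv_val]; ring)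

example (H : Subgroup (GL (Fin 4) ℂ)) : True := trivial


lemma ffφ_inj : Function.Injective ffφ := by
  intro p q h
  have hv : ffM (p.1 : Matrix (Fin 2) (Fin 2) ℂ) (p.2 : ℂ)
      ((Matrix.GeneralLinearGroup.det p.1 * p.2⁻¹ : ℂˣ) : ℂ) =
      ffM (q.1 : Matrix (Fin 2) (Fin 2) ℂ) (q.2 : ℂ)
      ((Matrix.GeneralLinearGroup.det q.1 * q.2⁻¹ : ℂˣ) : ℂ) := congrArg Units.val h
  have hA : (p.1 : Matrix (Fin 2) (Fin 2) ℂ) = (q.1 : Matrix (Fin 2) (Fin 2) ℂ) := by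
    ext i j
    fin_cases i <;> fin_cases j
    · exact congrFun (congrFun hv 1) 1
    · exact congrFun (congrFun hv 1) 2
    · exact congrFun (congrFun hv 2) 1
    · exact congrFun (congrFun hv 2) 2
  have hc : (p.2 : ℂ) = (q.2 : ℂ) := congrFun (congrFun hv 0) 0
  exact Prod.ext (Units.ext hA) (Units.ext hc)

lemma ffφ_range (H : Subgroup (GL (Fin 4) ℂ))
    (hH : (H : Set (GL (Fin 4) ℂ)) = ffSet) : ffφ.range = H := by
  apply SetLike.coe_injective
  rw [hH]
  ext M
  constructor
  · rintro ⟨p, rfl⟩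
    refine ⟨(p.1 : Matrix (Fin 2) (Fin 2) ℂ) 0 0, (p.1 : Matrix (Fin 2) (Fin 2) ℂ) 1 1,
      -((p.1 : Matrix (Fin 2) (Fin 2) ℂ) 1 0), (p.1 : Matrix (Fin 2) (Fin 2) ℂ) 0 1,
      (p.2 : ℂ), ((Matrix.GeneralLinearGroup.det p.1 * p.2⁻¹ : ℂˣ) : ℂ), ?_, p.2.ne_zero, Units.ne_zero _, ?_, ?_⟩
    · push_cast [Units.val_inv_eq_inv_val]
      rw [Matrix.GeneralLinearGroup.val_det_apply, Matrix.det_fin_two]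
      field_simp
      ring
    · intro hz
      have : det (p.1 : Matrix (Fin 2) (Fin 2) ℂ) = 0 := by
        rw [Matrix.det_fin_two]; linear_combination hz
      exact (Matrix.GeneralLinearGroup.det p.1).ne_zero
        (by rwa [Matrix.GeneralLinearGroup.val_det_apply])
    · show ffM _ _ _ = _
      unfold ffM
      rw [neg_neg]
  · rintro ⟨a₁, a₂, b₁, b₂, c₁, c₂, habc, hc₁, hc₂, hab, hM⟩
    have hdet : det !![a₁, b₂; -b₁, a₂] ≠ 0 := by
      rw [Matrix.det_fin_two_of]
      intro hz; apply hab; linear_combination hz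
    refine ⟨(Matrix.GeneralLinearGroup.mkOfDetNeZero _ hdet, Units.mk0 c₁ hc₁), ?_⟩
    refine Units.ext ?_
    show ffM _ _ _ = _
    rw [hM]
    have hcoe : ((Matrix.GeneralLinearGroup.mkOfDetNeZero !![a₁, b₂; -b₁, a₂] hdet : GL (Fin 2) ℂ) :
        Matrix (Fin 2) (Fin 2) ℂ) = !![a₁, b₂; -b₁, a₂] := rfl
    have hd : ((Matrix.GeneralLinearGroup.det
          (Matrix.GeneralLinearGroup.mkOfDetNeZero !![a₁, b₂; -b₁, a₂] hdet) *
        (Units.mk0 c₁ hc₁)⁻¹ : ℂˣ) : ℂ) = c₂ := by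
      push_cast [Units.val_inv_eq_inv_val, Units.val_mk0]
      rw [Matrix.GeneralLinearGroup.val_det_apply, hcoe, Matrix.det_fin_two_of]
      field_simp
      linear_combination habc
    rw [hd]
    unfold ffM
    rw [hcoe]
    norm_num

/-- The group `Γ` of free fermionic matrices is isomorphic to
`GL(2, ℂ) × GL(1, ℂ)` (where `GL(1, ℂ) = ℂˣ`). -/
theorem ffGroup_iso_GL2_times_GL1 (H : Subgroup (GL (Fin 4) ℂ))
    (hH : (H : Set (GL (Fin 4) ℂ)) = ffSet) :
    Nonempty (H ≃* GL (Fin 2) ℂ × ℂˣ) := by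
  exact ⟨(MulEquiv.subgroupCongr (ffφ_range H hH).symm).trans (MonoidHom.ofInjective ffφ_inj).symm⟩

end
end
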